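/- If f(t,x) solves the heat equation ∂_t f = Δf on a locally finite weighted graph satisfying the curvature condition of the paper, and α > 0 is chosen large enough (depending on k, m), then the function F(t,x) = t|∇f|²(t,x) + α f²(t,x) satisfies (∂_t − Δ)F ≤ 0; consequently, by the maximum principle, t|∇f|²(t,x) + α f²(t,x) ≤ α sup_V f₀² for all t ≥ 0, so |∇f|²(t,x) ≤ (α/t) sup_V f₀². -/

import Mathlib

/-!
Along the heat flow `∂ₜ|∇f|² = 2(∇f, ∇Δf)`, and the Bochner formula
`Δ|∇f|² = 4Γ₂(f) + 2(∇f, ∇Δf)` cancels these third-order terms, leaving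
`(∂ₜ - Δ)F = (1 - α)|∇f|² - 4tΓ₂(f) ≤ (1 - α - 2tk)|∇f|² ≤ 0` by the curvature condition.

For the maximum principle, subtract the barrier `ε((C + 1)t + dist(x, x₀))`. Since
`Δ dist(·, x₀) ≤ C` it turns a subsolution into a strict one, and it pushes a bounded function
below the initial bound outside a finite ball. A violation of the bound would then produce a
maximum on `[0, T] × V` at a positive time, where `∂ₜ ≥ 0 ≥ Δ` contradicts strictness.
Letting `ε → 0` gives the estimate.
-/

open Finset Real

/-- Graph Laplacian `Δf(x) = (1/d x) * Σ_{y ∈ N x} μ x y * (f y - f x)`. -/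
noncomputable def glap {V : Type*} (N : V → Finset V) (μ : V → V → ℝ) (d : V → ℝ)
    (f : V → ℝ) (x : V) : ℝ :=
  (1 / d x) * ∑ y ∈ N x, μ x y * (f y - f x)

/-- Gradient norm squared `|∇f|²(x)`. -/
noncomputable def ggrad {V : Type*} (N : V → Finset V) (μ : V → V → ℝ) (d : V → ℝ)
    (f : V → ℝ) (x : V) : ℝ :=
  (1 / d x) * ∑ y ∈ N x, μ x y * (f y - f x) ^ 2

/-- Pointwise inner product `(∇f, ∇g)(x)`. -/
noncomputable def ginner {V : Type*} (N : V → Finset V) (μ : V → V → ℝ) (d : V → ℝ)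
    (f g : V → ℝ) (x : V) : ℝ :=
  (1 / d x) * ∑ y ∈ N x, μ x y * (f y - f x) * (g y - g x)

/-- Hessian norm squared `|D²f|²(x)`. -/
noncomputable def ghess {V : Type*} (N : V → Finset V) (μ : V → V → ℝ) (d : V → ℝ)
    (f : V → ℝ) (x : V) : ℝ :=
  (1 / d x) * ∑ y ∈ N x, (μ x y / d y) * ∑ z ∈ N y, μ y z * (f x - 2 * f y + f z) ^ 2

/-- Carré du champ `Γ(f,g)(x) = (1/2)[Δ(fg) - fΔg - gΔf](x)`. -/
noncomputable def ggamma {V : Type*} (N : V → Finset V) (μ : V → V → ℝ) (d : V → ℝ)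
    (f g : V → ℝ) (x : V) : ℝ :=
  (1 / 2) * (glap N μ d (fun y => f y * g y) x - f x * glap N μ d g x - g x * glap N μ d f x)

/-- Iterated carré du champ `Γ₂(f,f)(x) = (1/2)[ΔΓ(f,f) - 2Γ(f,Δf)](x)`. -/
noncomputable def ggamma2 {V : Type*} (N : V → Finset V) (μ : V → V → ℝ) (d : V → ℝ)
    (f : V → ℝ) (x : V) : ℝ :=
  (1 / 2) * (glap N μ d (ggamma N μ d f f) x - 2 * ggamma N μ d f (glap N μ d f) x)

section GraphCalculus

variable {V : Type*} (N : V → Finset V) (μ : V → V → ℝ) (d : V → ℝ)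

theorem glap_add (g h : V → ℝ) (x : V) :
    glap N μ d (fun y => g y + h y) x = glap N μ d g x + glap N μ d h x := by
  unfold glap
  rw [← mul_add, ← sum_add_distrib]
  exact congrArg _ (sum_congr rfl fun y _ => by ring)

theorem glap_sub (g h : V → ℝ) (x : V) :
    glap N μ d (fun y => g y - h y) x = glap N μ d g x - glap N μ d h x := by
  unfold glap
  rw [← mul_sub, ← sum_sub_distrib]
  exact congrArg _ (sum_congr rfl fun y _ => by ring)

theorem glap_const_mul (a : ℝ) (g : V → ℝ) (x : V) :
    glap N μ d (fun y => a * g y) x = a * glap N μ d g x := by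
  unfold glap
  rw [mul_sum, mul_sum, mul_sum]
  exact sum_congr rfl fun y _ => by ring

theorem glap_sub_const (g : V → ℝ) (c : ℝ) (x : V) :
    glap N μ d (fun y => g y - c) x = glap N μ d g x := by
  simp only [glap, sub_sub_sub_cancel_right]

theorem ggrad_eq_ginner (g : V → ℝ) (x : V) : ggrad N μ d g x = ginner N μ d g g x := by
  unfold ggrad ginner
  exact congrArg _ (sum_congr rfl fun y _ => by ring)

theorem ggamma_eq_half_ginner (g h : V → ℝ) (x : V) :
    ggamma N μ d g h x = (1 / 2) * ginner N μ d g h x := by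
  unfold ggamma ginner glap
  have hsum : ∑ y ∈ N x, μ x y * (g y - g x) * (h y - h x)
      = ∑ y ∈ N x, μ x y * (g y * h y - g x * h x)
        - g x * ∑ y ∈ N x, μ x y * (h y - h x) - h x * ∑ y ∈ N x, μ x y * (g y - g x) := by
    rw [mul_sum, mul_sum, ← sum_sub_distrib, ← sum_sub_distrib]
    exact sum_congr rfl fun y _ => by ring
  rw [hsum]
  ring

theorem glap_sq (g : V → ℝ) (x : V) :
    glap N μ d (fun y => g y ^ 2) x = ggrad N μ d g x + 2 * g x * glap N μ d g x := by
  unfold glap ggrad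
  have hsum : ∑ y ∈ N x, μ x y * (g y ^ 2 - g x ^ 2)
      = ∑ y ∈ N x, μ x y * (g y - g x) ^ 2 + 2 * g x * ∑ y ∈ N x, μ x y * (g y - g x) := by
    rw [mul_sum, ← sum_add_distrib]
    exact sum_congr rfl fun y _ => by ring
  rw [hsum]
  ring

theorem glap_ggrad (g : V → ℝ) (x : V) :
    glap N μ d (ggrad N μ d g) x
      = 4 * ggamma2 N μ d g x + 2 * ginner N μ d g (glap N μ d g) x := by
  have hgrad : ggrad N μ d g = fun y => 2 * ggamma N μ d g g y := by
    funext y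
    rw [ggamma_eq_half_ginner, ggrad_eq_ginner]
    ring
  rw [hgrad, glap_const_mul, ggamma2, ggamma_eq_half_ginner]
  ring

theorem ggrad_nonneg (hnn : ∀ x y, 0 ≤ μ x y) (hdpos : ∀ x, 0 < d x) (g : V → ℝ) (x : V) :
    0 ≤ ggrad N μ d g x :=
  mul_nonneg (one_div_nonneg.2 (hdpos x).le)
    (sum_nonneg fun y _ => mul_nonneg (hnn x y) (sq_nonneg _))

theorem ggrad_le_of_abs_le (hd : ∀ x, d x = ∑ y ∈ N x, μ x y) (hnn : ∀ x y, 0 ≤ μ x y)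
    (hdpos : ∀ x, 0 < d x) {g : V → ℝ} {M : ℝ} (hg : ∀ y, |g y| ≤ M) (x : V) :
    ggrad N μ d g x ≤ (2 * M) ^ 2 := by
  have hterm : ∀ y, (g y - g x) ^ 2 ≤ (2 * M) ^ 2 := fun y =>
    sq_le_sq' (by linarith [abs_le.1 (hg y), abs_le.1 (hg x)])
      (by linarith [abs_le.1 (hg y), abs_le.1 (hg x)])
  calc ggrad N μ d g x ≤ (1 / d x) * ∑ y ∈ N x, μ x y * (2 * M) ^ 2 :=
        mul_le_mul_of_nonneg_left
          (sum_le_sum fun y _ => mul_le_mul_of_nonneg_left (hterm y) (hnn x y))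
          (one_div_nonneg.2 (hdpos x).le)
    _ = (2 * M) ^ 2 := by
        rw [← sum_mul, ← hd x]
        field_simp [(hdpos x).ne']

theorem glap_nonpos_of_forall_le (hnn : ∀ x y, 0 ≤ μ x y) (hdpos : ∀ x, 0 < d x)
    {g : V → ℝ} {x : V} (hmax : ∀ y, g y ≤ g x) : glap N μ d g x ≤ 0 :=
  mul_nonpos_of_nonneg_of_nonpos (one_div_nonneg.2 (hdpos x).le)
    (sum_nonpos fun y _ => mul_nonpos_of_nonneg_of_nonpos (hnn x y) (sub_nonpos.2 (hmax y)))

theorem hasDerivAt_ggrad {f : ℝ → V → ℝ} {f' : V → ℝ} {t : ℝ}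
    (hf : ∀ y, HasDerivAt (fun s => f s y) (f' y) t) (x : V) :
    HasDerivAt (fun s => ggrad N μ d (f s) x) (2 * ginner N μ d (f t) f' x) t := by
  have hsum : HasDerivAt (fun s => ∑ y ∈ N x, μ x y * (f s y - f s x) ^ 2)
      (∑ y ∈ N x, μ x y * (2 * (f t y - f t x) * (f' y - f' x))) t :=
    HasDerivAt.fun_sum fun y _ =>
      (((hf y).fun_sub (hf x)).fun_pow 2).const_mul (μ x y) |>.congr_deriv (by ring)
  refine (hsum.const_mul (1 / d x)).congr_deriv ?_
  rw [ginner, mul_sum, mul_sum, mul_sum]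
  exact sum_congr rfl fun y _ => by ring

theorem hasDerivAt_bernstein {f : ℝ → V → ℝ} {t : ℝ}
    (hheat : ∀ y, HasDerivAt (fun s => f s y) (glap N μ d (f t) y) t) (α : ℝ) (x : V) :
    HasDerivAt (fun s => s * ggrad N μ d (f s) x + α * f s x ^ 2)
      (ggrad N μ d (f t) x + 2 * t * ginner N μ d (f t) (glap N μ d (f t)) x
        + 2 * α * f t x * glap N μ d (f t) x) t := by
  have := ((hasDerivAt_id t).mul (hasDerivAt_ggrad N μ d hheat x)).add
    (((hheat x).pow 2).const_mul α)
  exact this.congr_deriv (by simp only [id_eq]; ring)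

theorem bernstein_heat_eq (g : V → ℝ) (t α : ℝ) (x : V) :
    ggrad N μ d g x + 2 * t * ginner N μ d g (glap N μ d g) x + 2 * α * g x * glap N μ d g x
        - glap N μ d (fun y => t * ggrad N μ d g y + α * g y ^ 2) x
      = (1 - α) * ggrad N μ d g x - 4 * t * ggamma2 N μ d g x := by
  rw [glap_add, glap_const_mul, glap_const_mul N μ d α, glap_sq, glap_ggrad]
  ring

theorem bernstein_heat_nonpos (hnn : ∀ x y, 0 ≤ μ x y) (hdpos : ∀ x, 0 < d x)
    {m k t α : ℝ} (hm : 0 < m) {g : V → ℝ} {x : V}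
    (hcurv : (1 / m) * glap N μ d g x ^ 2 + (k / 2) * ggrad N μ d g x ≤ ggamma2 N μ d g x)
    (ht : 0 ≤ t) (hα : 1 - 2 * t * k ≤ α) :
    ggrad N μ d g x + 2 * t * ginner N μ d g (glap N μ d g) x + 2 * α * g x * glap N μ d g x
        - glap N μ d (fun y => t * ggrad N μ d g y + α * g y ^ 2) x ≤ 0 := by
  have hlap : 0 ≤ t * ((1 / m) * glap N μ d g x ^ 2) := by positivity
  rw [bernstein_heat_eq]
  calc (1 - α) * ggrad N μ d g x - 4 * t * ggamma2 N μ d g x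
      ≤ (1 - α) * ggrad N μ d g x
          - 4 * t * ((1 / m) * glap N μ d g x ^ 2 + (k / 2) * ggrad N μ d g x) := by gcongr
    _ ≤ (1 - α - 2 * t * k) * ggrad N μ d g x := by linarith
    _ ≤ 0 := mul_nonpos_of_nonpos_of_nonneg (by linarith) (ggrad_nonneg N μ d hnn hdpos g x)

end GraphCalculus

theorem finite_setOf_dist_le {V : Type*} {G : SimpleGraph V} (hconn : G.Connected)
    {N : V → Finset V} (hadj : ∀ x y, y ∈ N x ↔ G.Adj x y) (x₀ : V) (n : ℕ) :
    {x | G.dist x x₀ ≤ n}.Finite := by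
  induction n with
  | zero =>
    refine (Set.finite_singleton x₀).subset fun x hx => ?_
    simpa [hconn.dist_eq_zero_iff] using hx
  | succ n ih =>
    refine (ih.union (ih.biUnion fun y _ => (N y).finite_toSet)).subset fun x hx => ?_
    rcases Nat.lt_or_ge (G.dist x x₀) (n + 1) with hlt | hge
    · exact Or.inl (Nat.lt_succ_iff.1 hlt)
    · obtain ⟨p, hp⟩ := SimpleGraph.exists_walk_of_dist_ne_zero (by omega : G.dist x x₀ ≠ 0)
      cases p with
      | nil => simp at hge
      | @cons _ y _ hxy q =>
        have hy : G.dist y x₀ ≤ n := by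
          have hx' : G.dist x x₀ ≤ n + 1 := hx
          have := SimpleGraph.dist_le q
          rw [SimpleGraph.Walk.length_cons] at hp
          omega
        exact Or.inr (Set.mem_biUnion hy ((hadj y x).2 hxy.symm))

theorem HasDerivAt.nonneg_of_isMaxOn_Icc {g : ℝ → ℝ} {g' a t : ℝ} (hg : HasDerivAt g g' t)
    (hat : a < t) (hmax : IsMaxOn g (Set.Icc a t) t) : 0 ≤ g' := by
  have hcone : a - t ∈ posTangentConeAt (Set.Icc a t) t :=
    sub_mem_posTangentConeAt_of_segment_subset
      ((convex_Icc a t).segment_subset (Set.right_mem_Icc.2 hat.le) (Set.left_mem_Icc.2 hat.le))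
  have := hmax.localize.hasFDerivWithinAt_nonpos hg.hasFDerivAt.hasFDerivWithinAt hcone
  simp only [ContinuousLinearMap.toSpanSingleton_apply, smul_eq_mul] at this
  exact nonneg_of_mul_nonpos_right this (sub_neg.2 hat)

theorem IsCompact.exists_forall_le_finset {V : Type*} {φ : ℝ → V → ℝ} {K : Set ℝ}
    (hK : IsCompact K) (hKne : K.Nonempty) {S : Finset V} (hS : S.Nonempty)
    (hφ : ∀ x ∈ S, ContinuousOn (fun t => φ t x) K) :
    ∃ t₁ ∈ K, ∃ x₁ ∈ S, ∀ t ∈ K, ∀ x ∈ S, φ t x ≤ φ t₁ x₁ := by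
  obtain ⟨t₁, ht₁, hmax⟩ := hK.exists_isMaxOn hKne (ContinuousOn.finset_sup'_apply hS hφ)
  obtain ⟨x₁, hx₁, hsup⟩ := S.exists_mem_eq_sup' hS (φ t₁)
  refine ⟨t₁, ht₁, x₁, hx₁, fun t ht x hx => ?_⟩
  calc φ t x ≤ S.sup' hS (φ t) := le_sup' (φ t) hx
    _ ≤ S.sup' hS (φ t₁) := hmax ht
    _ = φ t₁ x₁ := hsup

section HeatMaximumPrinciple

open Filter Topology

variable {V : Type*} {G : SimpleGraph V} {N : V → Finset V} {μ : V → V → ℝ} {d : V → ℝ}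

theorem glap_le_of_isMaxOn (hnn : ∀ x y, 0 ≤ μ x y) (hdpos : ∀ x, 0 < d x)
    {φ : ℝ → V → ℝ} {φ' t : ℝ} {x : V} (hφ : HasDerivAt (fun s => φ s x) φ' t) (ht : 0 < t)
    (htime : IsMaxOn (fun s => φ s x) (Set.Icc 0 t) t) (hspace : ∀ y, φ t y ≤ φ t x) :
    glap N μ d (φ t) x ≤ φ' :=
  (glap_nonpos_of_forall_le N μ d hnn hdpos hspace).trans (hφ.nonneg_of_isMaxOn_Icc ht htime)

theorem le_of_strict_heat_subsolution (hnn : ∀ x y, 0 ≤ μ x y) (hdpos : ∀ x, 0 < d x)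
    {φ φ' : ℝ → V → ℝ} (hφ : ∀ x, ∀ t ≥ 0, HasDerivAt (fun s => φ s x) (φ' t x) t)
    (hstrict : ∀ t > 0, ∀ x, φ' t x < glap N μ d (φ t) x)
    {S : Finset V} (hS : S.Nonempty) {T M₀ : ℝ} (hT : 0 ≤ T) (h0 : ∀ x, φ 0 x ≤ M₀)
    (hout : ∀ t ∈ Set.Icc 0 T, ∀ x ∉ S, φ t x < M₀) :
    ∀ t ∈ Set.Icc 0 T, ∀ x, φ t x ≤ M₀ := by
  have hcont : ∀ x ∈ S, ContinuousOn (fun t => φ t x) (Set.Icc 0 T) := fun x _ t ht =>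
    (hφ x t ht.1).continuousAt.continuousWithinAt
  obtain ⟨t₁, ht₁, x₁, hx₁, hmax⟩ :=
    isCompact_Icc.exists_forall_le_finset (Set.nonempty_Icc.2 hT) hS hcont
  suffices hmax₁ : φ t₁ x₁ ≤ M₀ by
    intro t ht x
    by_cases hx : x ∈ S
    · exact (hmax t ht x hx).trans hmax₁
    · exact (hout t ht x hx).le
  by_contra! hlt
  have hspace : ∀ y, φ t₁ y ≤ φ t₁ x₁ := by
    intro y
    by_cases hy : y ∈ S
    · exact hmax t₁ ht₁ y hy
    · exact ((hout t₁ ht₁ y hy).trans hlt).le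
  have ht₁pos : 0 < t₁ := ht₁.1.lt_of_ne fun h => by
    subst h
    exact (h0 x₁).not_gt hlt
  have := glap_le_of_isMaxOn (N := N) hnn hdpos (hφ x₁ t₁ ht₁.1) ht₁pos
    (fun s hs => hmax s ⟨hs.1, hs.2.trans ht₁.2⟩ x₁ hx₁) hspace
  exact (hstrict t₁ ht₁pos x₁).not_ge this

theorem sub_barrier_le_of_heat_subsolution (hconn : G.Connected)
    (hadj : ∀ x y, y ∈ N x ↔ G.Adj x y) (hnn : ∀ x y, 0 ≤ μ x y) (hdpos : ∀ x, 0 < d x)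
    {x₀ : V} {C : ℝ} (hC : 0 ≤ C) (hH : ∀ x, glap N μ d (fun y => (G.dist y x₀ : ℝ)) x ≤ C)
    {u u' : ℝ → V → ℝ} (hu : ∀ x, ∀ t ≥ 0, HasDerivAt (fun s => u s x) (u' t x) t)
    (hsub : ∀ t > 0, ∀ x, u' t x - glap N μ d (u t) x ≤ 0)
    {T B M₀ : ℝ} (hT : 0 ≤ T) (hB : ∀ t ∈ Set.Icc 0 T, ∀ x, u t x ≤ B)
    (h0 : ∀ x, u 0 x ≤ M₀) {ε : ℝ} (hε : 0 < ε) :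
    ∀ t ∈ Set.Icc 0 T, ∀ x, u t x - ε * ((C + 1) * t + G.dist x x₀) ≤ M₀ := by
  obtain ⟨R, hR⟩ := exists_nat_gt ((B - M₀) / ε)
  rw [div_lt_iff₀ hε] at hR
  set S := (finite_setOf_dist_le hconn hadj x₀ R).toFinset
  refine le_of_strict_heat_subsolution (N := N) hnn hdpos (φ' := fun t x => u' t x - ε * (C + 1))
    (fun x t ht => ?_) (fun t ht x => ?_) (S := S) ⟨x₀, by simp [S]⟩ hT (fun x => ?_)
    (fun t ht x hx => ?_)
  · exact ((hu x t ht).sub ((((hasDerivAt_id t).const_mul (C + 1)).add_const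
      (G.dist x x₀ : ℝ)).const_mul ε)).congr_deriv (by simp)
  · have hlap : glap N μ d (fun y => u t y - ε * ((C + 1) * t + G.dist y x₀)) x
        = glap N μ d (u t) x - ε * glap N μ d (fun y => (G.dist y x₀ : ℝ)) x := by
      simp only [mul_add, ← sub_sub]
      rw [glap_sub, glap_sub_const, glap_const_mul]
    have := hsub t ht x
    have := mul_le_mul_of_nonneg_left (hH x) hε.le
    rw [hlap]
    linarith
  · have := Nat.cast_nonneg (α := ℝ) (G.dist x x₀)
    have := h0 x
    nlinarith
  · have hRx : (R : ℝ) < G.dist x x₀ := by simpa [S] using hx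
    have := mul_nonneg hε.le (mul_nonneg (by linarith : 0 ≤ C + 1) ht.1)
    nlinarith [hB t ht x]

theorem heat_maximum_principle (hconn : G.Connected)
    (hadj : ∀ x y, y ∈ N x ↔ G.Adj x y) (hnn : ∀ x y, 0 ≤ μ x y) (hdpos : ∀ x, 0 < d x)
    {x₀ : V} {C : ℝ} (hH : ∀ x, glap N μ d (fun y => (G.dist y x₀ : ℝ)) x ≤ C)
    {u u' : ℝ → V → ℝ} (hu : ∀ x, ∀ t ≥ 0, HasDerivAt (fun s => u s x) (u' t x) t)
    (hsub : ∀ t > 0, ∀ x, u' t x - glap N μ d (u t) x ≤ 0)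
    (hbdd : ∀ T ≥ 0, ∃ B, ∀ t ∈ Set.Icc 0 T, ∀ x, u t x ≤ B)
    {M₀ : ℝ} (h0 : ∀ x, u 0 x ≤ M₀) :
    ∀ t ≥ 0, ∀ x, u t x ≤ M₀ := by
  intro T hT x
  obtain ⟨B, hB⟩ := hbdd T hT
  set K : ℝ := (max C 0 + 1) * T + G.dist x x₀
  have hbarrier : ∀ ε > 0, u T x - ε * K ≤ M₀ := fun ε hε =>
    sub_barrier_le_of_heat_subsolution hconn hadj hnn hdpos (le_max_right C 0)
      (fun y => (hH y).trans (le_max_left C 0)) hu hsub hT hB h0 hε T ⟨hT, le_rfl⟩ x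
  have hlim : Tendsto (fun ε => u T x - ε * K) (𝓝[>] 0) (𝓝 (u T x)) :=
    ((continuous_const.sub (continuous_id.mul continuous_const)).tendsto' 0 _
      (by simp)).mono_left nhdsWithin_le_nhds
  exact le_of_tendsto hlim (eventually_nhdsWithin_of_forall hbarrier)

end HeatMaximumPrinciple

theorem stmt19_general {V : Type*} (G : SimpleGraph V)
    (hconn : G.Connected)
    (N : V → Finset V) (μ : V → V → ℝ) (d : V → ℝ)
    (hadj : ∀ x y, y ∈ N x ↔ G.Adj x y)
    (hnn : ∀ x y, 0 ≤ μ x y)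
    (hd : ∀ x, d x = ∑ y ∈ N x, μ x y) (hdpos : ∀ x, 0 < d x)
    (x₀ : V) (C : ℝ)
    (hH : ∀ x, glap N μ d (fun y => (G.dist y x₀ : ℝ)) x ≤ C)
    (m k : ℝ) (hm : 0 < m)
    (hcurv : ∀ g : V → ℝ, ∀ x,
      (1 / m) * (glap N μ d g x) ^ 2 + (k / 2) * ggrad N μ d g x ≤ ggamma2 N μ d g x)
    (f : ℝ → V → ℝ)
    (hheat : ∀ x t, HasDerivAt (fun s => f s x) (glap N μ d (f t) x) t)
    (hbdd : ∃ M, ∀ t ≥ (0 : ℝ), ∀ x, |f t x| ≤ M)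
    (α : ℝ) (hα : 0 < α)
    (hαbig : ∀ t ≥ (0 : ℝ), 1 + 2 * t * (-k + max (2 - 2 / m) 0) ≤ α) :
    (∀ t ≥ (0 : ℝ), ∀ x,
      deriv (fun s => s * ggrad N μ d (f s) x + α * (f s x) ^ 2) t
          - glap N μ d (fun y => t * ggrad N μ d (f t) y + α * (f t y) ^ 2) x ≤ 0) ∧
      ∀ M₀ : ℝ, (∀ y, (f 0 y) ^ 2 ≤ M₀) →
        ∀ t ≥ (0 : ℝ), ∀ x, t * ggrad N μ d (f t) x + α * (f t x) ^ 2 ≤ α * M₀ := by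
  obtain ⟨M, hM⟩ := hbdd
  have hderiv := fun x t => hasDerivAt_bernstein N μ d (fun y => hheat y t) α x
  have hsub := fun t (ht : 0 ≤ t) x =>
    bernstein_heat_nonpos N μ d (α := α) hnn hdpos hm (hcurv (f t) x) ht
      (by nlinarith [hαbig t ht, le_max_right (2 - 2 / m) 0])
  refine ⟨fun t ht x => (hderiv x t).deriv ▸ hsub t ht x, fun M₀ hM₀ =>
    heat_maximum_principle hconn hadj hnn hdpos hH (fun x t _ => hderiv x t)
      (fun t ht => hsub t ht.le) (fun T _ => ⟨T * (2 * M) ^ 2 + α * M ^ 2, fun t ht x => ?_⟩)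
      (fun x => ?_)⟩
  · have hf : f t x ^ 2 ≤ M ^ 2 := sq_le_sq' (abs_le.1 (hM t ht.1 x)).1 (abs_le.1 (hM t ht.1 x)).2
    exact add_le_add
      (mul_le_mul ht.2 (ggrad_le_of_abs_le N μ d hd hnn hdpos (hM t ht.1) x)
        (ggrad_nonneg N μ d hnn hdpos _ x) (ht.1.trans ht.2))
      (mul_le_mul_of_nonneg_left hf hα.le)
  · simpa using mul_le_mul_of_nonneg_left (hM₀ x) hα.le

/-- Bernstein estimate: under the curvature condition and with
`α > 0` large enough, `F(t,x) = t|∇f|² + α f²` satisfies `(∂ₜ - Δ)F ≤ 0` and, by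
the maximum principle, `t|∇f|²(t,x) + α f(t,x)² ≤ α sup f₀²` for all `t ≥ 0`. -/
theorem stmt19 {V : Type*} (G : SimpleGraph V) [DecidableRel G.Adj]
    (hconn : G.Connected)
    (N : V → Finset V) (μ : V → V → ℝ) (d : V → ℝ)
    (hadj : ∀ x y, y ∈ N x ↔ G.Adj x y)
    (hsym : ∀ x y, μ x y = μ y x) (hnn : ∀ x y, 0 ≤ μ x y)
    (hd : ∀ x, d x = ∑ y ∈ N x, μ x y) (hdpos : ∀ x, 0 < d x)
    (x₀ : V) (C : ℝ) (hC : 0 ≤ C)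
    (hH : ∀ x, glap N μ d (fun y => (G.dist y x₀ : ℝ)) x ≤ C)
    (m k : ℝ) (hm : 0 < m)
    (hcurv : ∀ g : V → ℝ, ∀ x,
      (1 / m) * (glap N μ d g x) ^ 2 + (k / 2) * ggrad N μ d g x ≤ ggamma2 N μ d g x)
    (f : ℝ → V → ℝ)
    (hheat : ∀ x t, HasDerivAt (fun s => f s x) (glap N μ d (f t) x) t)
    (hbdd : ∃ M, ∀ t ≥ (0 : ℝ), ∀ x, |f t x| ≤ M)
    (α : ℝ) (hα : 0 < α)
    (hαbig : ∀ t ≥ (0 : ℝ), 1 + 2 * t * (-k + max (2 - 2 / m) 0) ≤ α) :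
    (∀ t ≥ (0 : ℝ), ∀ x,
      deriv (fun s => s * ggrad N μ d (f s) x + α * (f s x) ^ 2) t
          - glap N μ d (fun y => t * ggrad N μ d (f t) y + α * (f t y) ^ 2) x ≤ 0) ∧
      ∀ M₀ : ℝ, (∀ y, (f 0 y) ^ 2 ≤ M₀) →
        ∀ t ≥ (0 : ℝ), ∀ x, t * ggrad N μ d (f t) x + α * (f t x) ^ 2 ≤ α * M₀ :=
  stmt19_general G hconn N μ d hadj hnn hd hdpos x₀ C hH m k hm hcurv f hheat hbdd α hα hαbig
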